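/- arXiv:2301.09587 — 9 statements merged into one kernel-verified Lean document; each statement's English description precedes it below -/
import Mathlib

section
/- Let n be a non-negative integer, let α and β be complex numbers that are not negative integers, and let x be a complex number. Then ∑_{k=0}^{n} C(α, n−k) · C(β+k, k) · x^k = ∑_{k=0}^{n} (−1)^{n+k} · C(β−α+n, n−k) · C(β+k, k) · (x+1)^k. -/
/-!
Expand `(x + 1) ^ k = ∑ C(k, j) x ^ j` and compare coefficients of `x ^ j`. Writing `k = j + i`
and `m = n - j`, trinomial revision `C(k, j) C(β + k, k) = C(β + j, j) C(β + j + i, i)` and upper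
negation `(-1) ^ i C(β + j + i, i) = C(-β - j - 1, i)` turn the coefficient on the right into
`(-1) ^ m C(β + j, j)` times a Chu–Vandermonde convolution, which equals
`C(m - 1 - α, m) = (-1) ^ m C(α, m)`. The identity holds in any commutative binomial ring, with
`Ring.choose` as the generalized binomial coefficient.
-/

open Finset Polynomial

/-- Generalized binomial coefficient `C(z,k) = z(z-1)⋯(z-k+1)/k!`. -/
noncomputable def cchoose (z : ℂ) (k : ℕ) : ℂ :=
  (∏ i ∈ Finset.range k, (z - i)) / (k.factorial : ℂ)

theorem sum_range_choose_mul_pow_of_le {R : Type*} [CommSemiring R] (x : R) {k n : ℕ}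
    (hkn : k ≤ n) : ∑ j ∈ range (n + 1), (k.choose j : R) * x ^ j = (x + 1) ^ k := by
  have hdeg : ((X + 1 : R[X]) ^ k).natDegree < n + 1 := by
    have : ((X + 1 : R[X]) ^ k).natDegree ≤ k := by compute_degree
    omega
  simpa [coeff_X_add_one_pow] using (eval_eq_sum_range' hdeg x).symm

theorem Finset.sum_range_choose_smul_eq_sum_range_add {M : Type*} [AddCommMonoid M] (f : ℕ → M)
    {j n : ℕ} (hjn : j ≤ n) :
    ∑ k ∈ range (n + 1), k.choose j • f k =
      ∑ i ∈ range (n - j + 1), (j + i).choose j • f (j + i) := by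
  rw [show n + 1 = j + (n - j + 1) by omega, sum_range_add,
    sum_eq_zero fun k hk => by rw [Nat.choose_eq_zero_of_lt (mem_range.mp hk), zero_smul],
    zero_add]

namespace Ring

variable {R : Type*} [CommRing R] [BinomialRing R]

theorem choose_natCast_sub_one_sub (z : R) (k : ℕ) :
    choose ((k : R) - 1 - z) k = (-1) ^ k * choose z k := by
  have h := choose_neg (z - k + 1) k
  rw [show z - k + 1 + k - 1 = z by ring, Int.negOnePow_def, Units.smul_def] at h
  rw [show (k : R) - 1 - z = -(z - k + 1) by ring, h]
  simp

theorem sum_range_neg_one_pow_mul_choose_add_mul_choose (z w : R) (m : ℕ) :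
    ∑ i ∈ range (m + 1), (-1) ^ i * choose (z + i) i * choose w (m - i) =
      choose (w - z - 1) m := by
  have hneg (i : ℕ) : (-1) ^ i * choose (z + i) i = choose (-z - 1) i := by
    rw [← choose_natCast_sub_one_sub]
    ring_nf
  simp only [hneg]
  rw [show w - z - 1 = (-z - 1) + w by ring, add_choose_eq m (Commute.all _ _),
    Nat.sum_antidiagonal_eq_sum_range_succ_mk]

theorem sum_range_neg_one_pow_mul_choose_mul_choose_mul_choose (a b : R) {j n : ℕ}
    (hjn : j ≤ n) :
    ∑ k ∈ range (n + 1), (-1) ^ (n + k) * choose (b - a + n) (n - k) * choose (b + k) k *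
        (k.choose j : R) = choose a (n - j) * choose (b + j) j := by
  obtain ⟨m, rfl⟩ := Nat.exists_eq_add_of_le hjn
  simp only [mul_comm _ (Nat.cast _ : R), ← nsmul_eq_mul]
  rw [sum_range_choose_smul_eq_sum_range_add _ hjn, Nat.add_sub_cancel_left]
  have hterm (i : ℕ) : (j + i).choose j • ((-1) ^ (j + m + (j + i)) *
      choose (b - a + ↑(j + m)) (j + m - (j + i)) * choose (b + ↑(j + i)) (j + i)) =
      (-1) ^ m * choose (b + j) j *
        ((-1) ^ i * choose (b + j + i) i * choose (b - a + ↑(j + m)) (m - i)) := by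
    have hsign : (-1 : R) ^ (j + m + (j + i)) = (-1) ^ m * (-1) ^ i := by
      rw [show j + m + (j + i) = 2 * j + (m + i) by ring, pow_add, pow_mul, pow_add]
      simp
    rw [hsign, Nat.add_sub_add_left, Nat.choose_symm_add, ← mul_smul_comm,
      show b + ((j + i : ℕ) : R) = b + j + i by push_cast; ring, choose_add_smul_choose]
    ring
  rw [sum_congr rfl fun i _ => hterm i, ← mul_sum,
    sum_range_neg_one_pow_mul_choose_add_mul_choose,
    show b - a + ↑(j + m) - (b + j) - 1 = (m : R) - 1 - a by push_cast; ring,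
    choose_natCast_sub_one_sub, mul_mul_mul_comm, ← mul_pow, neg_one_mul, neg_neg, one_pow,
    one_mul, mul_comm]

theorem sum_choose_mul_choose_mul_pow_eq (n : ℕ) (a b x : R) :
    ∑ k ∈ range (n + 1), choose a (n - k) * choose (b + k) k * x ^ k =
      ∑ k ∈ range (n + 1), (-1) ^ (n + k) * choose (b - a + n) (n - k) * choose (b + k) k *
        (x + 1) ^ k := by
  calc ∑ k ∈ range (n + 1), choose a (n - k) * choose (b + k) k * x ^ k
      = ∑ j ∈ range (n + 1), ∑ k ∈ range (n + 1), (-1) ^ (n + k) *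
          choose (b - a + n) (n - k) * choose (b + k) k * (k.choose j : R) * x ^ j := by
        refine sum_congr rfl fun j hj => ?_
        rw [← sum_mul, sum_range_neg_one_pow_mul_choose_mul_choose_mul_choose a b
          (mem_range_succ_iff.mp hj)]
    _ = _ := by
        rw [sum_comm]
        refine sum_congr rfl fun k hk => ?_
        rw [← sum_range_choose_mul_pow_of_le x (mem_range_succ_iff.mp hk), mul_sum]
        simp only [mul_assoc]

end Ring

theorem cchoose_eq_ringChoose (z : ℂ) (k : ℕ) : cchoose z k = Ring.choose z k := by
  rw [Ring.choose_eq_smul, cchoose, ← descPochhammer_eval_eq_prod_range, smul_eq_mul,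
    ← aeval_eq_smeval, aeval_def, eval₂_eq_eval_map, descPochhammer_map, div_eq_inv_mul]

theorem stmt_0_general (n : ℕ) (α β x : ℂ) :
    ∑ k ∈ range (n + 1), cchoose α (n - k) * cchoose (β + k) k * x ^ k =
      ∑ k ∈ range (n + 1), (-1 : ℂ) ^ (n + k) * cchoose (β - α + n) (n - k) *
        cchoose (β + k) k * (x + 1) ^ k := by
  simp only [cchoose_eq_ringChoose]
  exact Ring.sum_choose_mul_choose_mul_pow_eq n α β x

theorem stmt_0 (n : ℕ) (α β x : ℂ)
    (hα : ∀ m : ℕ, α ≠ -((m : ℂ) + 1)) (hβ : ∀ m : ℕ, β ≠ -((m : ℂ) + 1)) :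
    ∑ k ∈ range (n + 1), cchoose α (n - k) * cchoose (β + k) k * x ^ k =
      ∑ k ∈ range (n + 1), (-1 : ℂ) ^ (n + k) * cchoose (β - α + n) (n - k) *
        cchoose (β + k) k * (x + 1) ^ k :=
  stmt_0_general n α β x
end

section
/- For every non-negative integer n, the n-th harmonic number satisfies H_n = (1/2) · ∑_{k=0}^{n} (−1)^{n+k} · C(n,k) · C(n+k, k) · H_{n+k}, where C(a,b) denotes the ordinary binomial coefficient. -/
/-!
Since `(-1) ^ (n + k) = (-1) ^ (n - k)`, the sum is the `n`-th forward difference at `0` of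
`x ↦ H (x + n) * C(x + n, n)`. By the Leibniz rule for forward differences it equals
`∑ i, C(n, i) * ΔⁱH(n) * C(n + i, i)`, since `Δⁿ⁻ⁱ C(·, n) = C(·, i)`. The `i = 0` term is `H n`.
For `i ≥ 1`, `ΔⁱH(y) = (-1)^(i-1) (i-1)! y! / (y+i)!` turns the `i`-th term into
`(-1)^(i-1) C(n, i) / i`, and these sum to `H n` by the Gregory–Newton expansion of `H` at `0`.
-/

open Finset

/-- The `n`-th harmonic number `H_n = ∑_{j=1}^n 1/j`, with `H_0 = 0`. -/
noncomputable def H (n : ℕ) : ℝ :=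
  ∑ j ∈ Finset.range n, 1 / ((j : ℝ) + 1)

open fwdDiff Function Nat

section Leibniz

variable {M R : Type*} [AddCommMonoid M] [CommRing R] (h : M)

lemma fwdDiff_mul (f g : M → R) :
    Δ_[h] (f * g) = Δ_[h] f * (fun y ↦ g (y + h)) + f * Δ_[h] g := by
  ext y
  simp only [fwdDiff, Pi.mul_apply, Pi.add_apply]
  ring

lemma fwdDiff_iter_mul (f g : M → R) (n : ℕ) (y : M) :
    Δ_[h] ^[n] (f * g) y = ∑ i ∈ range (n + 1),
      (n.choose i : R) * (Δ_[h] ^[i] f y * Δ_[h] ^[n - i] g (y + i • h)) := by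
  induction n generalizing f g with
  | zero => simp
  | succ n ih =>
    rw [iterate_succ_apply, fwdDiff_mul, fwdDiff_iter_add, Pi.add_apply, ih, ih,
      sum_choose_succ_mul (fun i j ↦ Δ_[h] ^[i] f y * Δ_[h] ^[j] g (y + i • h)), add_comm]
    congr 1
    · refine sum_congr rfl fun i hi ↦ ?_
      rw [Nat.sub_add_comm (Nat.lt_succ_iff.mp (mem_range.mp hi)), iterate_succ_apply]
    · refine sum_congr rfl fun i _ ↦ ?_
      rw [← iterate_succ_apply, fwdDiff_iter_comp_add, add_assoc, succ_nsmul]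

end Leibniz

lemma AddMonoidHom.fwdDiff_iter_comp {M G G' : Type*} [AddCommMonoid M] [AddCommGroup G]
    [AddCommGroup G'] (e : G →+ G') (h : M) (f : M → G) (n : ℕ) (y : M) :
    Δ_[h] ^[n] (e ∘ f) y = e (Δ_[h] ^[n] f y) := by
  simp [fwdDiff_iter_eq_sum_shift, map_sum, map_zsmul]

lemma fwdDiff_iter_cast_choose {n j : ℕ} (hj : j ≤ n) (y : ℕ) :
    Δ_[1] ^[j] (fun x ↦ (x.choose n : ℝ)) y = y.choose (n - j) := by
  have key := fwdDiff_iter_choose (n - j) j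
  rw [Nat.add_sub_cancel' hj] at key
  simpa [key, comp_def] using (Int.castAddHom ℝ).fwdDiff_iter_comp 1 (fun x ↦ (x.choose n : ℤ)) j y

lemma fwdDiff_iter_one_div_add_one (m y : ℕ) :
    Δ_[1] ^[m] (fun x : ℕ ↦ 1 / ((x : ℝ) + 1)) y = (-1) ^ m * m ! * y ! / (y + m + 1)! := by
  induction m generalizing y with
  | zero =>
    rw [iterate_zero_apply, factorial_succ, factorial_zero]
    push_cast
    field_simp
  | succ m ih =>
    rw [iterate_succ_apply', fwdDiff, ih, ih, show y + 1 + m + 1 = y + m + 1 + 1 by ring,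
      show y + (m + 1) + 1 = y + m + 1 + 1 by ring]
    simp only [factorial_succ]
    push_cast
    field_simp
    ring

lemma fwdDiff_H : Δ_[1] H = fun x : ℕ ↦ 1 / ((x : ℝ) + 1) := by
  ext x
  simp [fwdDiff, H, sum_range_succ]

lemma fwdDiff_iter_succ_H (m y : ℕ) :
    Δ_[1] ^[m + 1] H y = (-1) ^ m * m ! * y ! / (y + m + 1)! := by
  rw [iterate_succ_apply, fwdDiff_H, fwdDiff_iter_one_div_add_one]

lemma H_eq_sum_neg_one_pow_mul_choose_div (n : ℕ) :
    H n = ∑ m ∈ range n, (-1) ^ m * n.choose (m + 1) / (m + 1 : ℝ) := by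
  have newton := shift_eq_sum_fwdDiff_iter 1 H n 0
  rw [zero_add, nsmul_one, Nat.cast_id] at newton
  rw [newton, sum_range_succ']
  simp only [fwdDiff_iter_succ_H, nsmul_eq_mul, iterate_zero, id, H, range_zero, sum_empty,
    mul_zero, add_zero, zero_add, factorial_zero, cast_one, mul_one]
  refine sum_congr rfl fun m _ ↦ ?_
  rw [factorial_succ]
  push_cast
  field_simp

lemma factorial_mul_factorial_div_mul_choose (m n : ℕ) :
    (m ! * n ! / (n + m + 1)! : ℝ) * (n + (m + 1)).choose (m + 1) = 1 / (m + 1) := by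
  have key := Nat.add_choose_mul_factorial_mul_factorial n (m + 1)
  rw [factorial_succ m, ← add_assoc] at key
  have hchoose : ((n + m + 1).choose (m + 1) : ℝ) ≠ 0 := by
    exact_mod_cast (Nat.choose_pos (by omega)).ne'
  rw [← add_assoc, ← key]
  push_cast
  field_simp

lemma sum_neg_one_pow_mul_choose_mul_H_eq_fwdDiff_iter (n : ℕ) :
    ∑ k ∈ range (n + 1), (-1 : ℝ) ^ (n + k) * n.choose k * (n + k).choose k * H (n + k) =
      Δ_[1] ^[n] ((fun x ↦ H (x + n)) * fun x ↦ ((x + n).choose n : ℝ)) 0 := by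
  rw [fwdDiff_iter_eq_sum_shift]
  refine sum_congr rfl fun k hk ↦ ?_
  obtain ⟨d, rfl⟩ := Nat.exists_eq_add_of_le (Nat.lt_succ_iff.mp (mem_range.mp hk))
  have hsign : (-1 : ℝ) ^ (k + d + k) = (-1) ^ d := by
    rw [show k + d + k = d + 2 * k by ring, pow_add, pow_mul, neg_one_sq, one_pow, mul_one]
  rw [hsign, Nat.add_sub_cancel_left, add_comm (k + d) k,
    Nat.choose_symm_add (a := k) (b := k + d)]
  simp only [zsmul_eq_mul, Pi.mul_apply, smul_eq_mul, mul_one, zero_add]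
  push_cast
  ring

lemma fwdDiff_iter_H_mul_choose (n : ℕ) :
    Δ_[1] ^[n] ((fun x ↦ H (x + n)) * fun x ↦ ((x + n).choose n : ℝ)) 0 =
      H n + ∑ m ∈ range n, (-1) ^ m * n.choose (m + 1) / (m + 1 : ℝ) := by
  have hH : ∀ i, Δ_[1] ^[i] (fun x ↦ H (x + n)) 0 = Δ_[1] ^[i] H n := fun i ↦ by
    simpa using fwdDiff_iter_comp_add 1 H n i 0
  have hchoose : ∀ j ≤ n, ∀ y, Δ_[1] ^[j] (fun x ↦ ((x + n).choose n : ℝ)) y =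
      (y + n).choose (n - j) := fun j hj y ↦ by
    rw [fwdDiff_iter_comp_add 1 (fun x ↦ (x.choose n : ℝ)) n j y, fwdDiff_iter_cast_choose hj]
  rw [fwdDiff_iter_mul, sum_range_succ', add_comm]
  congr 1
  · simp [hH, hchoose]
  · refine sum_congr rfl fun m hm ↦ ?_
    have hmn := mem_range.mp hm
    rw [hH, hchoose _ (by omega), fwdDiff_iter_succ_H, Nat.sub_sub_self hmn,
      smul_eq_mul, mul_one, zero_add, add_comm (m + 1) n]
    linear_combination (n.choose (m + 1) * (-1 : ℝ) ^ m) * factorial_mul_factorial_div_mul_choose m n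

theorem stmt_7 (n : ℕ) :
    H n = (1 / 2) * ∑ k ∈ range (n + 1), (-1 : ℝ) ^ (n + k) *
      (n.choose k : ℝ) * ((n + k).choose k : ℝ) * H (n + k) := by
  rw [sum_neg_one_pow_mul_choose_mul_H_eq_fwdDiff_iter, fwdDiff_iter_H_mul_choose,
    ← H_eq_sum_neg_one_pow_mul_choose_div]
  ring
end

section
/- Let n be a non-negative integer and let x be a complex number. Then ∑_{k=0}^{n} C(n,k) · C(2k,k) · x^k/4^k = (1/4^n) · ∑_{k=0}^{n} C(2k,k) · C(2n−2k, n−k) · (1+x)^k, where C(a,b) denotes the ordinary binomial coefficient. -/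
/-!
Expanding `(1 + x)^k` binomially and exchanging the sums reduces the identity to
`∑ₖ C(k,j) C(2k,k) C(2(n-k),n-k) = C(n,j) C(2j,j) 4^(n-j)`. Since `C(2k,k) (-1/4)^k = C(-1/2,k)`,
after scaling by `(-1/4)^n` the left side becomes `∑ₖ C(k,j) C(-1/2,k) C(-1/2,n-k)`. Trinomial
revision `C(k,j) C(r,k) = C(r,j) C(r-j,k-j)` and Chu–Vandermonde turn this into
`C(-1/2,j) C(-1-j,n-j) = C(-1/2,j) (-1)^(n-j) C(n,j)`.
-/

open Finset

namespace Ring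

section BinomialRing

variable {R : Type*} [CommRing R] [BinomialRing R]

theorem choose_neg_one_sub_natCast (j m : ℕ) :
    choose (-1 - j : R) m = (-1) ^ m * (j + m).choose m := by
  rw [show (-1 - j : R) = -(1 + j) by ring, choose_neg,
    show (1 + j + m - 1 : R) = ((j + m : ℕ) : R) by push_cast; ring, choose_natCast,
    Units.smul_def, zsmul_eq_mul, Int.cast_negOnePow_natCast]

theorem sum_natChoose_mul_choose_mul_choose (r s : R) (j m : ℕ) :
    ∑ k ∈ range (j + m + 1), (k.choose j : R) * (choose r k * choose s (j + m - k)) =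
      choose r j * choose (r - j + s) m := by
  have hvanish : ∀ k ∈ range (j + m + 1), k ∉ Ico j (j + m + 1) →
      (k.choose j : R) * (choose r k * choose s (j + m - k)) = 0 := by
    intro k hk hkj
    simp only [mem_Ico, mem_range] at hk hkj
    simp [Nat.choose_eq_zero_of_lt (by omega : k < j)]
  rw [← sum_subset (fun k hk => mem_range.2 (mem_Ico.1 hk).2) hvanish, sum_Ico_eq_sum_range,
    show j + m + 1 - j = m + 1 by omega, add_choose_eq m (Commute.all _ _), Nat.sum_antidiagonal_eq_sum_range_succ_mk, mul_sum]
  refine sum_congr rfl fun i _ => ?_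
  have hsplit := choose_smul_choose r (Nat.le_add_right j i)
  rw [nsmul_eq_mul, Nat.add_sub_cancel_left] at hsplit
  rw [← mul_assoc, hsplit, show j + m - (j + i) = m - i by omega, mul_assoc]

end BinomialRing

section Field

variable {K : Type*} [Field K] [CharZero K]

theorem succ_mul_choose_succ (r : K) (k : ℕ) :
    (k + 1 : K) * choose r (k + 1) = choose r k * (r - k) := by
  have h := descPochhammer_eq_factorial_smul_choose r (k + 1)
  rw [descPochhammer_succ_right, Polynomial.smeval_mul, descPochhammer_eq_factorial_smul_choose,
    nsmul_eq_mul, nsmul_eq_mul, Nat.factorial_succ] at h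
  simp only [Polynomial.smeval_sub, Polynomial.smeval_X, Polynomial.smeval_natCast, pow_one,
    pow_zero, nsmul_eq_mul, mul_one] at h
  have hk : (k.factorial : K) ≠ 0 := by exact_mod_cast k.factorial_ne_zero
  apply mul_left_cancel₀ hk
  push_cast at h
  linear_combination -h

theorem choose_neg_half (k : ℕ) :
    choose (-(1 / 2) : K) k = k.centralBinom * (-(1 / 4)) ^ k := by
  induction k with
  | zero => simp
  | succ k ih =>
    have hrec : ((k + 1 : ℕ) : K) * (k + 1).centralBinom = 2 * (2 * k + 1) * k.centralBinom := by
      exact_mod_cast congrArg (Nat.cast : ℕ → K) (Nat.succ_mul_centralBinom_succ k)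
    apply mul_left_cancel₀ (Nat.cast_add_one_ne_zero k)
    rw [succ_mul_choose_succ, ih]
    push_cast at hrec ⊢
    linear_combination -(-(1 / 4) : K) ^ (k + 1) * hrec

end Field

end Ring

namespace Nat

theorem sum_choose_mul_centralBinom_mul_centralBinom (n j : ℕ) :
    ∑ k ∈ range (n + 1), k.choose j * k.centralBinom * (n - k).centralBinom =
      n.choose j * j.centralBinom * 4 ^ (n - j) := by
  obtain hnj | hjn := lt_or_ge n j
  · rw [choose_eq_zero_of_lt hnj, zero_mul, zero_mul]
    refine sum_eq_zero fun k hk => ?_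
    rw [choose_eq_zero_of_lt (by rw [mem_range] at hk; omega), zero_mul, zero_mul]
  obtain ⟨m, rfl⟩ := exists_add_of_le hjn
  have hvand := Ring.sum_natChoose_mul_choose_mul_choose (-(1 / 2) : ℚ) (-(1 / 2)) j m
  rw [show (-(1 / 2) - j + -(1 / 2) : ℚ) = -1 - j by ring, Ring.choose_neg_one_sub_natCast,
    Ring.choose_neg_half, ← choose_symm_add] at hvand
  apply Nat.cast_injective (R := ℚ)
  apply mul_left_cancel₀ (pow_ne_zero (j + m) (by norm_num : (-(1 / 4) : ℚ) ≠ 0))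
  push_cast
  rw [mul_sum]
  convert hvand using 1
  · refine sum_congr rfl fun k hk => ?_
    have hsplit : (-(1 / 4) : ℚ) ^ (j + m) = (-(1 / 4)) ^ k * (-(1 / 4)) ^ (j + m - k) := by
      rw [← pow_add, Nat.add_sub_cancel' (by rw [mem_range] at hk; omega)]
    rw [hsplit, Ring.choose_neg_half, Ring.choose_neg_half]
    ring
  · rw [Nat.add_sub_cancel_left, pow_add]
    have hfour : (-(1 / 4) : ℚ) ^ m * 4 ^ m = (-1) ^ m := by rw [← mul_pow]; norm_num
    linear_combination (j.centralBinom * (-(1 / 4)) ^ j * ((j + m).choose j) : ℚ) * hfour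

end Nat

theorem one_add_pow_eq_sum_range_of_le {R : Type*} [CommSemiring R] (x : R) {k n : ℕ}
    (hkn : k ≤ n) : (1 + x) ^ k = ∑ j ∈ range (n + 1), (k.choose j : R) * x ^ j := by
  rw [add_comm, add_pow]
  refine (sum_congr rfl fun j _ => by ring).trans (sum_subset (range_subset_range.2 (by omega)) ?_)
  intro j hj hjk
  rw [mem_range] at hj hjk
  simp [Nat.choose_eq_zero_of_lt (by omega : k < j)]

theorem sum_centralBinom_mul_centralBinom_mul_one_add_pow {R : Type*} [CommSemiring R]
    (n : ℕ) (x : R) :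
    ∑ k ∈ range (n + 1), (k.centralBinom * (n - k).centralBinom : R) * (1 + x) ^ k =
      ∑ j ∈ range (n + 1), (n.choose j * j.centralBinom * 4 ^ (n - j) : R) * x ^ j := by
  calc _ = ∑ k ∈ range (n + 1), ∑ j ∈ range (n + 1),
        ((k.choose j * k.centralBinom * (n - k).centralBinom : ℕ) : R) * x ^ j := by
        refine sum_congr rfl fun k hk => ?_
        rw [one_add_pow_eq_sum_range_of_le x (n := n) (by rw [mem_range] at hk; omega), mul_sum]
        refine sum_congr rfl fun j _ => ?_
        push_cast
        ring
    _ = _ := by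
        rw [sum_comm]
        refine sum_congr rfl fun j _ => ?_
        rw [← sum_mul, ← Nat.cast_sum, Nat.sum_choose_mul_centralBinom_mul_centralBinom]
        push_cast
        rfl

theorem stmt_8 (n : ℕ) (x : ℂ) :
    ∑ k ∈ range (n + 1), (n.choose k : ℂ) * ((2 * k).choose k : ℂ) * x ^ k / 4 ^ k =
      (1 / 4 ^ n) * ∑ k ∈ range (n + 1), ((2 * k).choose k : ℂ) *
        ((2 * n - 2 * k).choose (n - k) : ℂ) * (1 + x) ^ k := by
  simp_rw [← Nat.mul_sub, ← Nat.centralBinom_eq_two_mul_choose]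
  rw [sum_centralBinom_mul_centralBinom_mul_one_add_pow, mul_sum]
  refine sum_congr rfl fun k hk => ?_
  rw [← Nat.add_sub_cancel' (by rw [mem_range] at hk; omega : k ≤ n), pow_add,
    Nat.add_sub_cancel_left]
  field_simp
end

section
/- Let n be a non-negative integer and let t be a nonzero complex number. Then the n-th Legendre polynomial P_n satisfies P_n((t²+1)/(2t)) = t^{−n} · ∑_{k=0}^{n} C(n,k) · C(2k,k) · ((t²−1)/4)^k, where C(a,b) denotes the ordinary binomial coefficient. -/
open Finset

/-!
Leibniz' rule applied to `(x - 1)ⁿ (x + 1)ⁿ` gives `2ⁿ Pₙ(x) = ∑ C(n,k)² (x - 1)ⁿ⁻ᵏ (x + 1)ᵏ`.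
At `x = (t² + 1) / (2t)` one has `x ∓ 1 = (2/t) ((t ∓ 1)/2)²`, so it remains to prove the identity
`∑ C(n,k)² p²⁽ⁿ⁻ᵏ⁾ q²ᵏ = ∑ C(n,k) C(2k,k) (pq)ᵏ (q - p)²⁽ⁿ⁻ᵏ⁾` (used with `q - p = 1`).
Both sides are the coefficient of `Xⁿ` in `((qX + p)(pX + q))ⁿ`, once the factor is
written either as a product of two binomials or as `pq (X + 1)² + (q - p)² X`.
-/

/-- The `n`-th Legendre polynomial via Rodrigues' formula,
`P_n(x) = 1/(2^n n!) ⬝ dⁿ/dxⁿ (x²-1)ⁿ`, as a function on `ℂ`. -/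
noncomputable def legendre (n : ℕ) (x : ℂ) : ℂ :=
  (1 / ((2 : ℂ) ^ n * (n.factorial : ℂ))) *
    iteratedDeriv n (fun y : ℂ => (y ^ 2 - 1) ^ n) x

namespace Polynomial

variable {R : Type*} [CommSemiring R]

theorem coeff_C_mul_X_add_C_pow (a b : R) (n k : ℕ) :
    ((C a * X + C b) ^ n).coeff k = n.choose k * a ^ k * b ^ (n - k) := by
  have h : (C a * X + C b) ^ n
      = ∑ m ∈ range (n + 1), C (n.choose m * a ^ m * b ^ (n - m)) * X ^ m := by
    rw [add_pow]
    refine sum_congr rfl fun m _ => ?_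
    simp only [map_mul, map_pow, map_natCast]
    ring
  simp only [h, finsetSum_coeff, coeff_C_mul_X_pow, sum_ite_eq, mem_range]
  split_ifs with hk
  · rfl
  · simp [Nat.choose_eq_zero_of_lt (by omega : n < k)]

end Polynomial

open Polynomial in
theorem sum_choose_sq_mul_sq_pow {R : Type*} [CommRing R] (n : ℕ) (p q : R) :
    ∑ k ∈ range (n + 1), (n.choose k : R) ^ 2 * (p ^ 2) ^ (n - k) * (q ^ 2) ^ k =
      ∑ k ∈ range (n + 1),
        (n.choose k : R) * ((2 * k).choose k : R) * (p * q) ^ k * ((q - p) ^ 2) ^ (n - k) := by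
  have hprod : (C q * X + C p) * (C p * X + C q) =
      C (p * q) * (X + 1) ^ 2 + C ((q - p) ^ 2) * X := by
    simp only [map_mul, map_pow, map_sub]
    ring
  have hLHS : ((C q * X + C p) ^ n * (C p * X + C q) ^ n).coeff n =
      ∑ k ∈ range (n + 1), (n.choose k : R) ^ 2 * (p ^ 2) ^ (n - k) * (q ^ 2) ^ k := by
    rw [coeff_mul, Nat.sum_antidiagonal_eq_sum_range_succ_mk]
    refine sum_congr rfl fun k hk => ?_
    have hkn : k ≤ n := Nat.lt_succ_iff.mp (mem_range.mp hk)
    rw [coeff_C_mul_X_add_C_pow, coeff_C_mul_X_add_C_pow, Nat.choose_symm hkn,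
      Nat.sub_sub_self hkn]
    ring
  have hRHS : ((C (p * q) * (X + 1) ^ 2 + C ((q - p) ^ 2) * X) ^ n).coeff n =
      ∑ k ∈ range (n + 1),
        (n.choose k : R) * ((2 * k).choose k : R) * (p * q) ^ k * ((q - p) ^ 2) ^ (n - k) := by
    rw [add_pow, finsetSum_coeff]
    refine sum_congr rfl fun k hk => ?_
    have hkn : k ≤ n := Nat.lt_succ_iff.mp (mem_range.mp hk)
    have hterm : (C (p * q) * (X + 1) ^ 2) ^ k * (C ((q - p) ^ 2) * X) ^ (n - k) *
          (n.choose k : R[X]) =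
        C (n.choose k * (p * q) ^ k * ((q - p) ^ 2) ^ (n - k)) *
          (X ^ (n - k) * (X + 1) ^ (2 * k)) := by
      simp only [mul_pow, ← pow_mul, map_mul, map_pow, map_natCast]
      ring
    rw [hterm, coeff_C_mul, coeff_X_pow_mul', if_pos (Nat.sub_le n k), Nat.sub_sub_self hkn,
      coeff_X_add_one_pow]
    ring
  rw [← hLHS, ← mul_pow, hprod, hRHS]

theorem Nat.choose_mul_descFactorial_mul_descFactorial_sub {n k : ℕ} (hk : k ≤ n) :
    n.choose k * n.descFactorial k * n.descFactorial (n - k) = n.factorial * n.choose k ^ 2 := by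
  rw [Nat.descFactorial_eq_factorial_mul_choose, Nat.descFactorial_eq_factorial_mul_choose,
    Nat.choose_symm hk, ← Nat.choose_mul_factorial_mul_factorial hk]
  ring

section

variable {𝕜 : Type*} [NontriviallyNormedField 𝕜]

theorem iteratedDeriv_add_const_pow (n k : ℕ) (c x : 𝕜) :
    iteratedDeriv k (fun y => (y + c) ^ n) x = (n.descFactorial k : 𝕜) * (x + c) ^ (n - k) := by
  simp [iteratedDeriv_comp_add_const k (· ^ n) c]

theorem iteratedDeriv_sq_sub_one_pow (n : ℕ) (x : 𝕜) :
    iteratedDeriv n (fun y => (y ^ 2 - 1) ^ n) x =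
      (n.factorial : 𝕜) *
        ∑ k ∈ range (n + 1), (n.choose k : 𝕜) ^ 2 * (x - 1) ^ (n - k) * (x + 1) ^ k := by
  have hfactor : (fun y : 𝕜 => (y ^ 2 - 1) ^ n) = fun y => (y + -1) ^ n * (y + 1) ^ n := by
    funext y
    rw [← mul_pow]
    ring
  rw [hfactor, iteratedDeriv_fun_mul (by fun_prop) (by fun_prop), mul_sum]
  refine sum_congr rfl fun k hk => ?_
  have hkn : k ≤ n := Nat.lt_succ_iff.mp (mem_range.mp hk)
  have hcoeff := congrArg (Nat.cast (R := 𝕜))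
    (Nat.choose_mul_descFactorial_mul_descFactorial_sub hkn)
  push_cast at hcoeff
  rw [iteratedDeriv_add_const_pow, iteratedDeriv_add_const_pow, Nat.sub_sub_self hkn,
    ← sub_eq_add_neg]
  linear_combination (x - 1) ^ (n - k) * (x + 1) ^ k * hcoeff

end

theorem legendre_eq_sum (n : ℕ) (x : ℂ) :
    legendre n x =
      ((2 : ℂ) ^ n)⁻¹ *
        ∑ k ∈ range (n + 1), (n.choose k : ℂ) ^ 2 * (x - 1) ^ (n - k) * (x + 1) ^ k := by
  have hfact : (n.factorial : ℂ) ≠ 0 := Nat.cast_ne_zero.mpr n.factorial_ne_zero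
  rw [legendre, iteratedDeriv_sq_sub_one_pow]
  field_simp

theorem stmt_9 (n : ℕ) (t : ℂ) (ht : t ≠ 0) :
    legendre n ((t ^ 2 + 1) / (2 * t)) =
      (t ^ n)⁻¹ * ∑ k ∈ range (n + 1), (n.choose k : ℂ) *
        ((2 * k).choose k : ℂ) * ((t ^ 2 - 1) / 4) ^ k := by
  have hsub : (t ^ 2 + 1) / (2 * t) - 1 = 2 / t * ((t - 1) / 2) ^ 2 := by field_simp; ring
  have hadd : (t ^ 2 + 1) / (2 * t) + 1 = 2 / t * ((t + 1) / 2) ^ 2 := by field_simp; ring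
  have hscale (a b : ℂ) : ∀ k ∈ range (n + 1),
      (n.choose k : ℂ) ^ 2 * (2 / t * a) ^ (n - k) * (2 / t * b) ^ k =
        (2 / t) ^ n * ((n.choose k : ℂ) ^ 2 * a ^ (n - k) * b ^ k) := by
    intro k hk
    rw [← pow_sub_mul_pow _ (Nat.lt_succ_iff.mp (mem_range.mp hk))]
    ring
  rw [legendre_eq_sum, hsub, hadd, sum_congr rfl (hscale _ _), ← mul_sum,
    sum_choose_sq_mul_sq_pow]
  simp only [show (t + 1) / 2 - (t - 1) / 2 = 1 by ring,
    show (t - 1) / 2 * ((t + 1) / 2) = (t ^ 2 - 1) / 4 by ring, one_pow, mul_one, div_pow]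
  field_simp
end

section
/- Let n be a non-negative integer and let t be a nonzero complex number. Then ∑_{k=0}^{n} (−1)^k · C(n,k) · P_k((t²+1)/(2t)) · t^k = C(2n,n) · ((1−t²)/4)^n, where P_k is the k-th Legendre polynomial and C(a,b) denotes the ordinary binomial coefficient. -/
open Finset

/-!
Taylor expansion of `(y² - 1)^k` at `x` turns Rodrigues' formula into
`P_k(x) = 2^{-k} [z^k] ((z + x)² - 1)^k`, and rescaling `z` gives `t^k P_k(x) = [z^k] Q^k` with
`Q = z² + t x z + t² (x² - 1) / 4`. By the binomial theorem `∑ (-1)^k C(n,k) [z^k] Q^k` is the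
single coefficient `[z^n] (z - Q)^n`, and for `x = (t² + 1) / (2t)` the quadratic `z - Q` is the
perfect square `-(z + (t² - 1) / 4)²`.
-/

open Polynomial

theorem Polynomial.iteratedDeriv_eval {𝕜 : Type*} [NontriviallyNormedField 𝕜] (p : 𝕜[X])
    (n : ℕ) :
    iteratedDeriv n (fun y => p.eval y) = fun y => (derivative^[n] p).eval y := by
  induction n with
  | zero => simp
  | succ n ih =>
    funext y
    rw [iteratedDeriv_succ, ih, Function.iterate_succ_apply', Polynomial.deriv]

theorem Polynomial.sum_neg_one_pow_mul_choose_mul_coeff_pow {R : Type*} [CommRing R]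
    (Q : R[X]) (n : ℕ) :
    ∑ k ∈ range (n + 1), (-1) ^ k * (n.choose k : R) * (Q ^ k).coeff k =
      ((X - Q) ^ n).coeff n := by
  rw [sub_eq_neg_add, add_pow, finsetSum_coeff]
  refine sum_congr rfl fun k hk => ?_
  have hkn : k ≤ n := Nat.lt_succ_iff.mp (mem_range.mp hk)
  rw [← C_eq_natCast, coeff_mul_C, coeff_mul_X_pow', if_pos (Nat.sub_le n k),
    Nat.sub_sub_self hkn, neg_pow Q, ← neg_one_mul, ← map_one C, ← map_neg C, ← map_pow C,
    coeff_C_mul]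
  ring

theorem legendre_eq_coeff (k : ℕ) (x : ℂ) :
    legendre k x = (2 ^ k)⁻¹ * (((X + C x) ^ 2 - 1) ^ k).coeff k := by
  have hp : (fun y : ℂ => (y ^ 2 - 1) ^ k) = fun y => ((X ^ 2 - 1) ^ k : ℂ[X]).eval y := by
    funext y
    simp
  have hk : (k.factorial : ℂ) ≠ 0 := Nat.cast_ne_zero.mpr k.factorial_ne_zero
  rw [legendre, hp, Polynomial.iteratedDeriv_eval, ← factorial_smul_hasseDeriv,
    LinearMap.smul_apply]
  beta_reduce
  rw [eval_smul, ← taylor_coeff, taylor_apply]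
  simp only [one_div, mul_inv_rev, pow_comp, sub_comp, X_comp, one_comp, nsmul_eq_mul]
  field_simp

theorem pow_mul_legendre_eq_coeff {t : ℂ} (ht : t ≠ 0) (k : ℕ) (x : ℂ) :
    t ^ k * legendre k x =
      ((X ^ 2 + C (t * x) * X + C (t ^ 2 * (x ^ 2 - 1) / 4)) ^ k).coeff k := by
  have hQ : X ^ 2 + C (t * x) * X + C (t ^ 2 * (x ^ 2 - 1) / 4) =
      C (t ^ 2 / 4) * ((X + C x) ^ 2 - 1).comp (C (2 / t) * X) := by
    refine Polynomial.funext fun y => ?_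
    simp only [eval_add, eval_mul, eval_pow, eval_C, eval_X, eval_comp, eval_sub, eval_one]
    field_simp
    ring
  have hscale : (t ^ 2 / 4) ^ k * (2 / t) ^ k = t ^ k * (2 ^ k)⁻¹ := by
    rw [← mul_pow, ← inv_pow, ← mul_pow]
    congr 1
    field_simp
    ring
  rw [hQ, mul_pow, ← C_pow, ← pow_comp, coeff_C_mul, comp_C_mul_X_coeff, legendre_eq_coeff]
  linear_combination -(((X + C x) ^ 2 - 1) ^ k).coeff k * hscale

theorem stmt_10 (n : ℕ) (t : ℂ) (ht : t ≠ 0) :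
    ∑ k ∈ range (n + 1), (-1 : ℂ) ^ k * (n.choose k : ℂ) *
        legendre k ((t ^ 2 + 1) / (2 * t)) * t ^ k =
      ((2 * n).choose n : ℂ) * ((1 - t ^ 2) / 4) ^ n := by
  set x := (t ^ 2 + 1) / (2 * t)
  set Q := X ^ 2 + C (t * x) * X + C (t ^ 2 * (x ^ 2 - 1) / 4)
  have hXQ : X - Q = C (-1) * (X + C ((t ^ 2 - 1) / 4)) ^ 2 := by
    refine Polynomial.funext fun y => ?_
    simp only [Q, x, eval_add, eval_sub, eval_mul, eval_pow, eval_C, eval_X]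
    field_simp
    ring
  calc ∑ k ∈ range (n + 1), (-1 : ℂ) ^ k * (n.choose k : ℂ) * legendre k x * t ^ k
      = ∑ k ∈ range (n + 1), (-1) ^ k * (n.choose k : ℂ) * (Q ^ k).coeff k := by
        refine sum_congr rfl fun k _ => ?_
        rw [← pow_mul_legendre_eq_coeff ht, mul_assoc _ (legendre k x), mul_comm (legendre k x)]
    _ = ((X - Q) ^ n).coeff n := sum_neg_one_pow_mul_choose_mul_coeff_pow Q n
    _ = ((2 * n).choose n : ℂ) * ((1 - t ^ 2) / 4) ^ n := by
        rw [hXQ, mul_pow, ← C_pow, ← pow_mul, coeff_C_mul, coeff_X_add_C_pow,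
          show 2 * n - n = n by omega, show (1 - t ^ 2) / 4 = -1 * ((t ^ 2 - 1) / 4) by ring,
          mul_pow]
        ring
end

section
/- For every non-negative integer n, ∑_{k=1}^{n} (−1)^{k} · C(n,k) · C(2k,k) · H_k/4^k = (1/2^{2n−1}) · C(2n,n) · (H_n − H_{2n}), where C(a,b) denotes the ordinary binomial coefficient. -/
/-!
Write `b_k = (-1)^k C(2k,k)/4^k`, the binomial coefficient `(-1/2 choose k)`, and
`c_n = C(2n,n)/4^n`, so that the left-hand side is `S_n = ∑_k C(n,k) b_k H_k` and the claim
is `S_n = 2 c_n (H_n - H_{2n})`. Creative telescoping gives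
`C(n+1,k) b_k = (2n+1)/(2n+2) · C(n,k) b_k + G(n,k) - G(n,k+1)` with
`G(n,k) = k C(n,k-1) b_k / (n+1)`. Multiplying by `H_k`, summing, and summing by parts turns
`S_{n+1} - (2n+1)/(2n+2) · S_n` into `(n+1)⁻¹ ∑_j C(n,j) b_{j+1}`, a Chu–Vandermonde sum
equal to `-c_n / (2(n+1))`. The claim then follows by induction on `n`, using
`c_{n+1} = (2n+1)/(2n+2) · c_n`.
-/

open Finset

open scoped Nat

noncomputable def centralRatio (n : ℕ) : ℝ := ((2 * n).choose n : ℝ) / 4 ^ n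

-- the generalized binomial coefficient `(-1/2).choose k`
noncomputable def negHalfChoose (k : ℕ) : ℝ := (-1) ^ k * centralRatio k

lemma H_succ (n : ℕ) : H (n + 1) = H n + 1 / ((n : ℝ) + 1) := sum_range_succ _ n

lemma centralRatio_succ (n : ℕ) :
    centralRatio (n + 1) = (2 * n + 1) / (2 * n + 2) * centralRatio n := by
  have h : ((n + 1 : ℕ) : ℝ) * (n + 1).centralBinom = 2 * (2 * n + 1) * n.centralBinom := by
    exact_mod_cast Nat.succ_mul_centralBinom_succ n
  simp only [centralRatio, ← Nat.centralBinom_eq_two_mul_choose, pow_succ]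
  field_simp
  push_cast at h
  linear_combination 2 * h

lemma negHalfChoose_succ (k : ℕ) :
    negHalfChoose (k + 1) = -((2 * k + 1) / (2 * k + 2)) * negHalfChoose k := by
  rw [negHalfChoose, negHalfChoose, centralRatio_succ, pow_succ]
  ring

lemma sum_choose_mul_negHalfChoose_add (n m : ℕ) :
    ∑ j ∈ range (n + 1), (n.choose j : ℝ) * negHalfChoose (j + m) =
      (-1) ^ m * centralRatio n * centralRatio m * n ! * m ! / (n + m)! := by
  induction n generalizing m with
  | zero => simp [negHalfChoose, centralRatio, m.factorial_ne_zero]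
  | succ n ih =>
    have pascal := sum_choose_succ_mul (fun j _ ↦ negHalfChoose (j + m)) n
    simp_rw [pascal, show ∀ i, i + 1 + m = i + (m + 1) from fun i ↦ by omega, ih m, ih (m + 1),
      ← add_assoc n m 1, centralRatio_succ, Nat.factorial_succ]
    push_cast
    field_simp
    ring

lemma sum_choose_mul_negHalfChoose_succ (n : ℕ) :
    ∑ j ∈ range (n + 1), (n.choose j : ℝ) * negHalfChoose (j + 1) =
      -centralRatio n / (2 * (n + 1)) := by
  have central_one : centralRatio 1 = 1 / 2 := by norm_num [centralRatio]
  rw [sum_choose_mul_negHalfChoose_add, central_one, Nat.factorial_succ n]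
  push_cast
  field_simp
  ring

lemma cast_succ_mul_choose_succ (n k : ℕ) :
    ((k : ℝ) + 1) * n.choose (k + 1) = ((n : ℝ) - k) * n.choose k := by
  rcases le_or_gt k n with hkn | hnk
  · have h := Nat.choose_succ_right_eq n k
    rw [← Nat.cast_inj (R := ℝ)] at h
    push_cast [hkn] at h
    linear_combination h
  · simp [Nat.choose_eq_zero_of_lt hnk, Nat.choose_eq_zero_of_lt (hnk.trans k.lt_succ_self)]

-- the factor `k` makes the truncated subtraction `k - 1` harmless at `k = 0`
noncomputable def negHalfChooseCertificate (n k : ℕ) : ℝ :=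
  k * (n.choose (k - 1) : ℝ) * negHalfChoose k / (n + 1)

lemma choose_succ_mul_negHalfChoose (n k : ℕ) :
    ((n + 1).choose k : ℝ) * negHalfChoose k =
      (2 * n + 1) / (2 * n + 2) * (n.choose k : ℝ) * negHalfChoose k +
        (negHalfChooseCertificate n k - negHalfChooseCertificate n (k + 1)) := by
  cases k with
  | zero =>
    simp only [negHalfChooseCertificate, Nat.add_sub_cancel, Nat.choose_zero_right,
      negHalfChoose_succ 0]
    push_cast
    field_simp
    ring
  | succ k =>
    have h := cast_succ_mul_choose_succ n k
    simp only [negHalfChooseCertificate, Nat.add_sub_cancel, Nat.choose_succ_succ,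
      Nat.succ_eq_add_one, negHalfChoose_succ (k + 1)]
    push_cast
    field_simp
    linear_combination (-2 * negHalfChoose (k + 1)) * h

lemma sum_range_sub_mul_eq {R : Type*} [CommRing R] (f g : ℕ → R) (N : ℕ) :
    ∑ k ∈ range N, (g k - g (k + 1)) * f k =
      g 0 * f 0 - g N * f N + ∑ k ∈ range N, g (k + 1) * (f (k + 1) - f k) := by
  induction N with
  | zero => simp
  | succ N ih =>
    rw [sum_range_succ, ih, sum_range_succ]
    ring

lemma sum_choose_mul_negHalfChoose_mul_H (n : ℕ) :
    ∑ k ∈ range (n + 1), (n.choose k : ℝ) * negHalfChoose k * H k =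
      2 * centralRatio n * (H n - H (2 * n)) := by
  induction n with
  | zero => simp [H]
  | succ n ih =>
    have boundary : negHalfChooseCertificate n 0 * H 0 -
        negHalfChooseCertificate n (n + 2) * H (n + 2) = 0 := by
      simp [negHalfChooseCertificate]
    have increment : ∀ k, negHalfChooseCertificate n (k + 1) * (H (k + 1) - H k) =
        (n.choose k : ℝ) * negHalfChoose (k + 1) / (n + 1) := fun k ↦ by
      rw [H_succ, negHalfChooseCertificate, Nat.add_sub_cancel]
      push_cast
      field_simp
      ring
    calc ∑ k ∈ range (n + 2), ((n + 1).choose k : ℝ) * negHalfChoose k * H k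
        = (2 * n + 1) / (2 * n + 2) *
              ∑ k ∈ range (n + 2), (n.choose k : ℝ) * negHalfChoose k * H k
          + ∑ k ∈ range (n + 2),
              (negHalfChooseCertificate n k - negHalfChooseCertificate n (k + 1)) * H k := by
          rw [mul_sum, ← sum_add_distrib]
          refine sum_congr rfl fun k _ ↦ ?_
          rw [choose_succ_mul_negHalfChoose]
          ring
      _ = (2 * n + 1) / (2 * n + 2) * (2 * centralRatio n * (H n - H (2 * n)))
          - centralRatio n / (2 * (n + 1) ^ 2) := by
          simp_rw [sum_range_sub_mul_eq, boundary, increment]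
          simp only [sum_range_succ _ (n + 1), Nat.choose_succ_self, Nat.cast_zero, zero_mul,
            zero_div, add_zero, zero_add]
          rw [← sum_div, ih, sum_choose_mul_negHalfChoose_succ]
          field_simp
          ring
      _ = 2 * centralRatio (n + 1) * (H (n + 1) - H (2 * (n + 1))) := by
          rw [centralRatio_succ, mul_add_one, H_succ (2 * n + 1), H_succ (2 * n),
            H_succ n]
          push_cast
          field_simp
          ring

theorem stmt_12 (n : ℕ) :
    ∑ k ∈ Finset.Icc 1 n, (-1 : ℝ) ^ k * (n.choose k : ℝ) *
        ((2 * k).choose k : ℝ) * H k / 4 ^ k =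
      (1 / (2 : ℝ) ^ (2 * (n : ℤ) - 1)) * ((2 * n).choose n : ℝ) *
        (H n - H (2 * n)) := by
  have two_zpow : (2 : ℝ) ^ (2 * (n : ℤ) - 1) = 4 ^ n / 2 := by
    rw [zpow_sub₀ two_ne_zero, zpow_one, zpow_mul, zpow_natCast]
    norm_num
  have drop_zero : ∑ k ∈ Icc 1 n, (n.choose k : ℝ) * negHalfChoose k * H k =
      ∑ k ∈ range (n + 1), (n.choose k : ℝ) * negHalfChoose k * H k := by
    rw [Nat.range_succ_eq_Icc_zero, ← insert_Icc_add_one_left_eq_Icc n.zero_le,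
      sum_insert (by simp)]
    simp [H]
  calc _ = ∑ k ∈ Icc 1 n, (n.choose k : ℝ) * negHalfChoose k * H k := by
        refine sum_congr rfl fun k _ ↦ ?_
        rw [negHalfChoose, centralRatio]
        ring
    _ = _ := by
        rw [drop_zero, sum_choose_mul_negHalfChoose_mul_H, two_zpow, centralRatio]
        field_simp
end

section
/- For every non-negative integer n, ∑_{k=0}^{n} 4^k · C(n,k)² / C(2k,k) = C(4n,2n)/C(2n,n), where C(a,b) denotes the ordinary binomial coefficient. -/
/-!
Write the summand as `n!² · term n k` with `term n k = 4^k / ((n-k)!² (2k)!)`. Zeilberger's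
algorithm produces the certificate `cert`, for which
`(n+1)²(2n+1)² term (n+1) k - (4n+1)(4n+3) term n k = cert n (k+1) - cert n k`.
Summing over `k` shows that `∑ₖ term n k` satisfies the same first-order recurrence as
`(4n)! / (2n)!³`, and both equal `1` at `n = 0`.
-/

open Finset
open scoped Nat

namespace BinomialSquareSum

noncomputable def term (n k : ℕ) : ℝ :=
  4 ^ k / (((n - k)! : ℝ) ^ 2 * (2 * k)!)

noncomputable def cert (n k : ℕ) : ℝ :=
  k * (2 * k - 1) * ((4 * n + 3) * k - 2 * (n + 1) * (3 * n + 2)) * 4 ^ k /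
    (((n + 1 - k)! : ℝ) ^ 2 * (2 * k)!)

lemma cert_zero (n : ℕ) : cert n 0 = 0 := by
  simp [cert]

lemma cert_succ_self (n : ℕ) :
    cert n (n + 1) = -((n + 1) ^ 2 * (2 * n + 1) ^ 2 * term (n + 1) (n + 1)) := by
  have := (2 * (n + 1)).factorial_pos
  simp only [cert, term, Nat.sub_self, Nat.factorial_zero]
  field_simp
  push_cast
  ring

lemma term_recurrence {n k : ℕ} (h : k ≤ n) :
    (n + 1) ^ 2 * (2 * n + 1) ^ 2 * term (n + 1) k - (4 * n + 1) * (4 * n + 3) * term n k =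
      cert n (k + 1) - cert n k := by
  obtain ⟨j, rfl⟩ := Nat.exists_eq_add_of_le h
  have := j.factorial_pos
  have := (2 * k).factorial_pos
  simp only [term, cert, show k + j + 1 - k = j + 1 by omega, show k + j - k = j by omega,
    show k + j + 1 - (k + 1) = j by omega, show 2 * (k + 1) = 2 * k + 1 + 1 by ring,
    Nat.factorial_succ]
  push_cast
  field_simp
  ring

lemma sum_term_recurrence (n : ℕ) :
    (n + 1) ^ 2 * (2 * n + 1) ^ 2 * ∑ k ∈ range (n + 2), term (n + 1) k =
      (4 * n + 1) * (4 * n + 3) * ∑ k ∈ range (n + 1), term n k := by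
  have telescope : ∑ k ∈ range (n + 1),
      ((n + 1) ^ 2 * (2 * n + 1) ^ 2 * term (n + 1) k - (4 * n + 1) * (4 * n + 3) * term n k) =
        cert n (n + 1) - cert n 0 := by
    rw [← sum_range_sub]
    exact sum_congr rfl fun k hk => term_recurrence (Nat.lt_succ_iff.mp (mem_range.mp hk))
  rw [sum_sub_distrib, ← mul_sum, ← mul_sum, cert_zero, cert_succ_self] at telescope
  rw [sum_range_succ, mul_add]
  linarith

lemma factorial_ratio_recurrence (n : ℕ) :
    (n + 1) ^ 2 * (2 * n + 1) ^ 2 * (((4 * (n + 1))! : ℝ) / ((2 * (n + 1))! : ℝ) ^ 3) =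
      (4 * n + 1) * (4 * n + 3) * (((4 * n)! : ℝ) / ((2 * n)! : ℝ) ^ 3) := by
  have := (2 * n).factorial_pos
  simp only [show 4 * (n + 1) = 4 * n + 1 + 1 + 1 + 1 by ring,
    show 2 * (n + 1) = 2 * n + 1 + 1 by ring, Nat.factorial_succ]
  push_cast
  field_simp
  ring

lemma sum_term (n : ℕ) :
    ∑ k ∈ range (n + 1), term n k = ((4 * n)! : ℝ) / ((2 * n)! : ℝ) ^ 3 := by
  induction n with
  | zero => simp [term]
  | succ n ih =>
    have hcoeff : ((n : ℝ) + 1) ^ 2 * (2 * n + 1) ^ 2 ≠ 0 := by positivity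
    apply mul_left_cancel₀ hcoeff
    rw [sum_term_recurrence, ih, factorial_ratio_recurrence]

lemma choose_summand_eq {n k : ℕ} (h : k ≤ n) :
    (4 : ℝ) ^ k * (n.choose k : ℝ) ^ 2 / ((2 * k).choose k : ℝ) =
      (n ! : ℝ) ^ 2 * term n k := by
  have := k.factorial_pos
  have := (n - k).factorial_pos
  have := (2 * k).factorial_pos
  rw [Nat.cast_choose ℝ h, Nat.cast_choose ℝ (by omega : k ≤ 2 * k),
    show 2 * k - k = k by omega, term]
  field_simp

end BinomialSquareSum

theorem stmt_14 (n : ℕ) :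
    ∑ k ∈ range (n + 1), (4 : ℝ) ^ k * (n.choose k : ℝ) ^ 2 /
        ((2 * k).choose k : ℝ) =
      ((4 * n).choose (2 * n) : ℝ) / ((2 * n).choose n : ℝ) := by
  have := n.factorial_pos
  have := (2 * n).factorial_pos
  rw [sum_congr rfl fun k hk =>
      BinomialSquareSum.choose_summand_eq (Nat.lt_succ_iff.mp (mem_range.mp hk)), ← mul_sum,
    BinomialSquareSum.sum_term, Nat.cast_choose ℝ (by omega : 2 * n ≤ 4 * n),
    Nat.cast_choose ℝ (by omega : n ≤ 2 * n), show 4 * n - 2 * n = 2 * n by omega,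
    show 2 * n - n = n by omega]
  field_simp
end

section
/- For every non-negative integer n, ∑_{k=0}^{n} C(2n,2k) · C(2n−2k, n−k) · 4^k = C(4n,2n), where C(a,b) denotes the ordinary binomial coefficient. -/
/-!
Write `(1 + x)^(4n) = ((1 + x)^2)^(2n) = (2x + (1 + x^2))^(2n)` and compare the coefficients of
`x^(2n)`. The term `(2x)^j (1 + x^2)^(2n-j)` of the binomial expansion contributes
`2^j C(2n-j, (2n-j)/2)` when `j` is even and nothing when `j` is odd; `j = 2k` gives the summand.
-/

open Finset Polynomial

theorem Finset.sum_range_two_mul_add_one_of_odd_eq_zero {M : Type*} [AddCommMonoid M]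
    (f : ℕ → M) (n : ℕ) (hf : ∀ j ≤ 2 * n, Odd j → f j = 0) :
    ∑ j ∈ range (2 * n + 1), f j = ∑ k ∈ range (n + 1), f (2 * k) := by
  induction n with
  | zero => simp
  | succ n ih =>
    rw [show 2 * (n + 1) + 1 = 2 * n + 1 + 1 + 1 by ring, sum_range_succ, sum_range_succ,
      ih fun j hj => hf j (by omega), hf _ (by omega) (odd_two_mul_add_one n),
      sum_range_succ _ (n + 1), add_zero, mul_add_one]

theorem Polynomial.coeff_X_sq_add_one_pow (R : Type*) [CommSemiring R] (m d : ℕ) :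
    ((X ^ 2 + 1 : R[X]) ^ m).coeff d = if 2 ∣ d then (m.choose (d / 2) : R) else 0 := by
  have h : (X ^ 2 + 1 : R[X]) ^ m = expand R 2 ((X + 1) ^ m) := by
    simp only [map_pow, map_add, expand_X, map_one]
  rw [h, coeff_expand two_pos, coeff_X_add_one_pow]

theorem Polynomial.coeff_two_mul_X_pow_mul_X_sq_add_one_pow (R : Type*) [CommSemiring R]
    (j m d : ℕ) :
    ((2 * X : R[X]) ^ j * (X ^ 2 + 1) ^ m).coeff (j + d) =
      2 ^ j * if 2 ∣ d then (m.choose (d / 2) : R) else 0 := by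
  rw [mul_pow, show (2 : R[X]) ^ j = C (2 ^ j) by rw [C_pow, map_ofNat], mul_assoc, coeff_C_mul,
    add_comm j, coeff_X_pow_mul', if_pos (Nat.le_add_left j d), Nat.add_sub_cancel, coeff_X_sq_add_one_pow]

theorem stmt_15 (n : ℕ) :
    ∑ k ∈ range (n + 1), (2 * n).choose (2 * k) * (2 * n - 2 * k).choose (n - k) * 4 ^ k =
      (4 * n).choose (2 * n) := by
  have hsq : (X + 1 : ℕ[X]) ^ (4 * n) = (2 * X + (X ^ 2 + 1)) ^ (2 * n) := by
    rw [show 4 * n = 2 * (2 * n) by ring, pow_mul]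
    ring
  calc ∑ k ∈ range (n + 1), (2 * n).choose (2 * k) * (2 * n - 2 * k).choose (n - k) * 4 ^ k
      = ∑ j ∈ range (2 * n + 1), (2 * n).choose j *
          (2 ^ j * if 2 ∣ 2 * n - j then (2 * n - j).choose ((2 * n - j) / 2) else 0) := by
        rw [sum_range_two_mul_add_one_of_odd_eq_zero]
        · refine sum_congr rfl fun k _ => ?_
          rw [← Nat.mul_sub, if_pos (dvd_mul_right 2 _), Nat.mul_div_cancel_left _ two_pos,
            pow_mul]
          ring
        · rintro j hjn ⟨i, rfl⟩
          rw [if_neg (by omega), mul_zero, mul_zero]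
    _ = ((2 * X + (X ^ 2 + 1) : ℕ[X]) ^ (2 * n)).coeff (2 * n) := by
        rw [add_pow, finsetSum_coeff]
        refine sum_congr rfl fun j hj => ?_
        have hjn : j ≤ 2 * n := Nat.lt_succ_iff.mp (mem_range.mp hj)
        have hcoeff := coeff_two_mul_X_pow_mul_X_sq_add_one_pow ℕ j (2 * n - j) (2 * n - j)
        rw [Nat.add_sub_cancel' hjn, Nat.cast_id] at hcoeff
        rw [coeff_mul_natCast, hcoeff, Nat.cast_id, mul_comm]
    _ = (4 * n).choose (2 * n) := by
        rw [← hsq, coeff_X_add_one_pow, Nat.cast_id]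
end

section
/- For every non-negative integer n, ∑_{k=0}^{n} C(n,k)² · H_k · H_{n−k} = C(2n,n) · ((H_{2n} − 2H_n)² + H_n^{(2)} − H_{2n}^{(2)}), where C(a,b) denotes the ordinary binomial coefficient. -/
/-!
Differentiate the Chu–Vandermonde identity `(x + y)_n = ∑ₖ C(n,k) (x)_k (y)_{n-k}` for falling
factorials once in `x` and once in `y`, at `x = y = n`. Algebraically: evaluate it at
`x = n + ε₁`, `y = n + ε₂` with `ε₁² = ε₂² = 0`. Expanding each factor `n - j + ε` as
`(n - j)(1 + ε/(n - j))` turns logarithmic derivatives of falling factorials into harmonic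
numbers: `(n + ε)_k = (n)_k (1 + (H_n - H_{n-k}) ε)`, while the `ε₁ε₂`-coefficient of
`(2n + ε₁ + ε₂)_n` is `(2n)_n` times `(H_{2n} - H_n)² - (H^{(2)}_{2n} - H^{(2)}_n)`.
Since `C(n,k) (n)_k (n)_{n-k} = n! C(n,k)²` and `(2n)_n = n! C(2n,n)`, comparing coefficients
gives the identity.
-/

open Finset

/-- The `n`-th generalized harmonic number of order 2, `H_n^{(2)} = ∑_{j=1}^n 1/j²`. -/
noncomputable def H2 (n : ℕ) : ℝ :=
  ∑ j ∈ Finset.range n, 1 / ((j : ℝ) + 1) ^ 2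

theorem sum_range_comp_natCast_sub {M : Type*} [AddCommGroup M] (g : ℝ → M) {n k : ℕ}
    (hk : k ≤ n) :
    ∑ j ∈ range k, g (n - j) = ∑ j ∈ range n, g (j + 1) - ∑ j ∈ range (n - k), g (j + 1) := by
  induction k with
  | zero => simp
  | succ k ih =>
    obtain ⟨m, hm⟩ : ∃ m, n - k = m + 1 := ⟨n - k - 1, by omega⟩
    have hcast : (n : ℝ) - k = m + 1 := by
      rw [← Nat.cast_sub (by omega : k ≤ n), hm, Nat.cast_succ]
    rw [sum_range_succ, ih (by omega), hm, show n - (k + 1) = m by omega, sum_range_succ, hcast]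
    abel

theorem sum_range_one_div_natCast_sub {n k : ℕ} (hk : k ≤ n) :
    ∑ j ∈ range k, 1 / ((n : ℝ) - j) = H n - H (n - k) :=
  sum_range_comp_natCast_sub (fun x => 1 / x) hk

theorem sum_range_one_div_natCast_sub_sq {n k : ℕ} (hk : k ≤ n) :
    ∑ j ∈ range k, 1 / ((n : ℝ) - j) ^ 2 = H2 n - H2 (n - k) :=
  sum_range_comp_natCast_sub (fun x => 1 / x ^ 2) hk

theorem prod_algebraMap_add_add_of_sq_eq_zero {K A ι : Type*} [Field K] [CommRing A]
    [Algebra K A] {ε δ : A} (hε : ε ^ 2 = 0) (hδ : δ ^ 2 = 0) (s : Finset ι) {c : ι → K}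
    (hc : ∀ i ∈ s, c i ≠ 0) :
    ∏ i ∈ s, (algebraMap K A (c i) + (ε + δ)) =
      algebraMap K A (∏ i ∈ s, c i) *
        (1 + algebraMap K A (∑ i ∈ s, 1 / c i) * (ε + δ) +
          algebraMap K A ((∑ i ∈ s, 1 / c i) ^ 2 - ∑ i ∈ s, 1 / c i ^ 2) * (ε * δ)) := by
  induction s using Finset.cons_induction with
  | empty => simp
  | cons i s hi ih =>
    rw [prod_cons, prod_cons, sum_cons, sum_cons, ← one_div_pow (c i),
      ih fun j hj => hc j (mem_cons_of_mem hj)]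
    have hci : algebraMap K A (c i) * algebraMap K A (1 / c i) = 1 := by
      rw [← map_mul, mul_one_div_cancel (hc i (mem_cons_self i s)), map_one]
    simp only [map_mul, map_add, map_sub, map_pow]
    set P := algebraMap K A (∏ i ∈ s, c i)
    set S := algebraMap K A (∑ i ∈ s, 1 / c i)
    set S₂ := algebraMap K A (∑ i ∈ s, 1 / c i ^ 2)
    linear_combination P * (S * (hε + hδ) + (S ^ 2 - S₂) * (δ * hε + ε * hδ)
      - (ε + δ + 2 * S * (ε * δ)) * hci)

theorem prod_range_natCast_add_add_sub {A : Type*} [CommRing A] [Algebra ℝ A] {ε δ : A}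
    (hε : ε ^ 2 = 0) (hδ : δ ^ 2 = 0) {n k : ℕ} (hk : k ≤ n) :
    ∏ j ∈ range k, ((n : A) + (ε + δ) - j) =
      n.descFactorial k * (1 + algebraMap ℝ A (H n - H (n - k)) * (ε + δ) +
        algebraMap ℝ A ((H n - H (n - k)) ^ 2 - (H2 n - H2 (n - k))) * (ε * δ)) := by
  have hfactor : ∀ j ∈ range k, (n : A) + (ε + δ) - j = algebraMap ℝ A (n - j) + (ε + δ) := by
    intro j _
    rw [map_sub, map_natCast, map_natCast]
    ring
  have hdesc : (n.descFactorial k : ℝ) = ∏ j ∈ range k, ((n : ℝ) - j) := by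
    rw [← descPochhammer_eval_eq_descFactorial, descPochhammer_eval_eq_prod_range]
  have hne : ∀ j ∈ range k, (n : ℝ) - j ≠ 0 := fun j hj =>
    sub_ne_zero.2 (Nat.cast_injective.ne (by simp at hj; omega))
  rw [prod_congr rfl hfactor, prod_algebraMap_add_add_of_sq_eq_zero hε hδ _ hne,
    sum_range_one_div_natCast_sub hk, sum_range_one_div_natCast_sub_sq hk, ← hdesc, map_natCast]

theorem prod_range_natCast_add_sub {A : Type*} [CommRing A] [Algebra ℝ A] {ε : A}
    (hε : ε ^ 2 = 0) {n k : ℕ} (hk : k ≤ n) :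
    ∏ j ∈ range k, ((n : A) + ε - j) =
      n.descFactorial k * (1 + algebraMap ℝ A (H n - H (n - k)) * ε) := by
  simpa using prod_range_natCast_add_add_sub hε (zero_pow two_ne_zero : (0 : A) ^ 2 = 0) hk

theorem prod_range_add_sub_eq_sum_choose {R : Type*} [CommRing R] (x y : R) (n : ℕ) :
    ∏ j ∈ range n, (x + y - j) =
      ∑ k ∈ range (n + 1),
        n.choose k * ((∏ j ∈ range k, (x - j)) * ∏ j ∈ range (n - k), (y - j)) := by
  have hprod (r : R) (k : ℕ) : (descPochhammer ℤ k).smeval r = ∏ j ∈ range k, (r - j) := by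
    rw [← Polynomial.aeval_eq_smeval, Polynomial.aeval_def, ← Polynomial.eval_map,
      descPochhammer_map, descPochhammer_eval_eq_prod_range]
  simpa only [hprod, Nat.sum_antidiagonal_eq_sum_range_succ_mk] using
    Ring.descPochhammer_smeval_add n (Commute.all x y)

theorem choose_mul_descFactorial_mul_descFactorial {n k : ℕ} (hk : k ≤ n) :
    n.choose k * (n.descFactorial k * n.descFactorial (n - k)) = n.factorial * n.choose k ^ 2 := by
  rw [Nat.descFactorial_eq_factorial_mul_choose, Nat.descFactorial_eq_factorial_mul_choose,
    Nat.choose_symm hk, ← Nat.choose_mul_factorial_mul_factorial hk]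
  ring

open DualNumber TrivSqZeroExt

-- `ℝ[ε][ε] ≅ ℝ[ε₁, ε₂] / (ε₁², ε₂²)`, and `z.snd.snd` is the `ε₁ε₂`-coefficient of `z`.
noncomputable def ε₁ : ℝ[ε][ε] := inl ε

noncomputable def ε₂ : ℝ[ε][ε] := ε

theorem ε₁_sq : ε₁ ^ 2 = 0 := by rw [ε₁, inl_pow, eps_pow_two, inl_zero]

theorem ε₂_sq : ε₂ ^ 2 = 0 := eps_pow_two

theorem vandermonde_eval_natCast_add_eps (n : ℕ) :
    ((2 * n).choose n : ℝ[ε][ε]) * (1 + algebraMap ℝ _ (H (2 * n) - H n) * (ε₁ + ε₂) +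
        algebraMap ℝ _ ((H (2 * n) - H n) ^ 2 - (H2 (2 * n) - H2 n)) * (ε₁ * ε₂)) =
      ∑ k ∈ range (n + 1), ((n.choose k ^ 2 : ℕ) : ℝ[ε][ε]) *
        ((1 + algebraMap ℝ _ (H n - H (n - k)) * ε₁) * (1 + algebraMap ℝ _ (H n - H k) * ε₂)) := by
  have hV := prod_range_add_sub_eq_sum_choose ((n : ℝ[ε][ε]) + ε₁) ((n : ℝ[ε][ε]) + ε₂) n
  rw [show (n : ℝ[ε][ε]) + ε₁ + (n + ε₂) = ((2 * n : ℕ) : ℝ[ε][ε]) + (ε₁ + ε₂) by push_cast; ring,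
    prod_range_natCast_add_add_sub (A := ℝ[ε][ε]) ε₁_sq ε₂_sq (Nat.le_mul_of_pos_left n two_pos),
    show 2 * n - n = n by omega, Nat.descFactorial_eq_factorial_mul_choose] at hV
  have hterm : ∀ k ∈ range (n + 1), (n.choose k : ℝ[ε][ε]) *
      ((∏ j ∈ range k, ((n : ℝ[ε][ε]) + ε₁ - j)) * ∏ j ∈ range (n - k), ((n : ℝ[ε][ε]) + ε₂ - j)) =
      n.factorial * (((n.choose k ^ 2 : ℕ) : ℝ[ε][ε]) *
        ((1 + algebraMap ℝ _ (H n - H (n - k)) * ε₁) * (1 + algebraMap ℝ _ (H n - H k) * ε₂))) := by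
    intro k hk
    have hk : k ≤ n := Nat.lt_succ_iff.1 (mem_range.1 hk)
    rw [prod_range_natCast_add_sub (A := ℝ[ε][ε]) ε₁_sq hk,
      prod_range_natCast_add_sub (A := ℝ[ε][ε]) ε₂_sq (Nat.sub_le n k), Nat.sub_sub_self hk]
    have hfac : (n.choose k : ℝ[ε][ε]) * (n.descFactorial k * n.descFactorial (n - k)) =
        n.factorial * (n.choose k ^ 2 : ℕ) := by
      exact_mod_cast congrArg (Nat.cast (R := ℝ[ε][ε]))
        (choose_mul_descFactorial_mul_descFactorial hk)
    linear_combination ((1 + algebraMap ℝ ℝ[ε][ε] (H n - H (n - k)) * ε₁) *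
      (1 + algebraMap ℝ ℝ[ε][ε] (H n - H k) * ε₂)) * hfac
  rw [sum_congr rfl hterm, ← mul_sum, Nat.cast_mul, mul_assoc] at hV
  have hfac : IsUnit (n.factorial : ℝ[ε][ε]) := by
    rw [← map_natCast (algebraMap ℝ ℝ[ε][ε])]
    exact (isUnit_iff_ne_zero.2 (by positivity)).map _
  exact hfac.mul_left_cancel hV

theorem stmt_18 (n : ℕ) :
    ∑ k ∈ range (n + 1), (n.choose k : ℝ) ^ 2 * H k * H (n - k) =
      ((2 * n).choose n : ℝ) *
        ((H (2 * n) - 2 * H n) ^ 2 + H2 n - H2 (2 * n)) := by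
  -- Multiplying by `(1 - H_n ε₁)(1 - H_n ε₂)` turns the `k`-th summand into
  -- `C(n,k)² (1 - H_{n-k} ε₁)(1 - H_k ε₂)`, whose `ε₁ε₂`-coefficient is `C(n,k)² H_k H_{n-k}`.
  have h := congrArg
    (fun z => ((1 - algebraMap ℝ _ (H n) * ε₁) * (1 - algebraMap ℝ _ (H n) * ε₂) * z).snd.snd)
    (vandermonde_eval_natCast_add_eps n)
  simp only [mul_sum, snd_sum, DualNumber.snd_mul, fst_mul, fst_add, snd_add, fst_sub, snd_sub,
    fst_one, snd_one, fst_zero, snd_zero, fst_inl, snd_inl, fst_natCast, snd_natCast, ε₁, ε₂,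
    fst_eps, snd_eps, algebraMap_eq_inl', Algebra.algebraMap_self, RingHom.id_apply] at h
  refine (sum_congr rfl fun k _ => ?_).trans (h.symm.trans ?_) <;> push_cast <;> ring
end
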